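/- Let K satisfy ∫_{ℝ^N} min(|x|²,1)K(x)dx < ∞, the monotonicity K(x) ≥ K(y) for |x| ≤ |y|, and s₀ > 0 where s₀ is the critical kernel exponent. Then for any s ∈ (0, s₀), limsup_{r→0⁺} r^{N+2s} inf_{|x|=r} K(x) = +∞; i.e., there is a sequence r_n → 0⁺ with r_n^{N+2s} inf_{|x|=r_n} K(x) → +∞. -/

import Mathlib

open MeasureTheory Filter Topology Set
open scoped ENNReal

noncomputable def kernelTail (N : ℕ) (K : EuclideanSpace ℝ (Fin N) → ℝ) (r : ℝ) : ℝ≥0∞ :=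
  ∫⁻ y in {y : EuclideanSpace ℝ (Fin N) | r ≤ ‖y‖}, ENNReal.ofReal (K y)

def kernelIntegrable (N : ℕ) (K : EuclideanSpace ℝ (Fin N) → ℝ) : Prop :=
  ∫⁻ x : EuclideanSpace ℝ (Fin N), ENNReal.ofReal (min (‖x‖ ^ 2) 1 * K x) < ⊤

noncomputable def kernelS0 (N : ℕ) (K : EuclideanSpace ℝ (Fin N) → ℝ) : ℝ :=
  sSup {s : ℝ | 0 ≤ s ∧
    Tendsto (fun r : ℝ => ENNReal.ofReal (r ^ (2 * s)) * kernelTail N K r) (𝓝[>] (0 : ℝ)) (𝓝 ⊤)}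

/-! If `‖y‖ ^ (N + 2s) K(y)` stayed bounded by `M` near the origin, then comparing `K` with
`M ‖y‖ ^ (-(N + 2s))` and rescaling would give `kernelTail N K r ≤ C r ^ (-2s) + kernelTail N K ε`,
the last term being finite by integrability. For `s < s' < s₀` this forces
`r ^ (2s') · kernelTail N K r → 0`, contradicting the definition of `s₀`. Radial monotonicity
makes `K` constant on spheres, so the infimum over `‖x‖ = r` is just the value at any such point. -/

section PowerTail

open Module

variable {E : Type*} [NormedAddCommGroup E] [NormedSpace ℝ E] [FiniteDimensional ℝ E]
  [MeasurableSpace E] [BorelSpace E] (μ : Measure E) [μ.IsAddHaarMeasure]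

lemma lintegral_comp_inv_smul_addHaar {g : E → ℝ≥0∞} (hg : Measurable g) {r : ℝ} (hr : 0 < r) :
    ∫⁻ y, g (r⁻¹ • y) ∂μ = ENNReal.ofReal (r ^ finrank ℝ E) * ∫⁻ z, g z ∂μ := by
  rw [← lintegral_map hg (measurable_const_smul _), μ.map_addHaar_smul (inv_ne_zero hr.ne'),
    lintegral_smul_measure, inv_pow, inv_inv, abs_of_pos (by positivity), smul_eq_mul]

lemma setLIntegral_norm_rpow_neg_le {p r : ℝ} (hp : 0 < p) (hr : 0 < r) :
    ∫⁻ y in {y : E | r ≤ ‖y‖}, ENNReal.ofReal (‖y‖ ^ (-p)) ∂μ ≤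
      ENNReal.ofReal (2 ^ p * r ^ ((finrank ℝ E : ℝ) - p)) *
        ∫⁻ z, ENNReal.ofReal ((1 + ‖z‖) ^ (-p)) ∂μ := by
  -- on `r ≤ ‖y‖` we have `(r + ‖y‖) / 2 ≤ ‖y‖`, and `(r + ‖y‖) / 2 = (r / 2) (1 + ‖r⁻¹ • y‖)`
  have hpt : ∀ y ∈ {y : E | r ≤ ‖y‖}, ENNReal.ofReal (‖y‖ ^ (-p)) ≤
      ENNReal.ofReal ((2⁻¹ * r) ^ (-p)) * ENNReal.ofReal ((1 + ‖r⁻¹ • y‖) ^ (-p)) := by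
    intro y (hy : r ≤ ‖y‖)
    rw [← ENNReal.ofReal_mul (by positivity), ← Real.mul_rpow (by positivity) (by positivity)]
    refine ENNReal.ofReal_le_ofReal (Real.rpow_le_rpow_of_nonpos (by positivity) ?_ (by linarith))
    rw [norm_smul, Real.norm_of_nonneg (inv_nonneg.mpr hr.le)]
    field_simp
    linarith
  calc ∫⁻ y in {y : E | r ≤ ‖y‖}, ENNReal.ofReal (‖y‖ ^ (-p)) ∂μ
      ≤ ∫⁻ y, ENNReal.ofReal ((2⁻¹ * r) ^ (-p)) * ENNReal.ofReal ((1 + ‖r⁻¹ • y‖) ^ (-p)) ∂μ :=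
        (setLIntegral_mono' (measurableSet_le measurable_const measurable_norm) hpt).trans
          (setLIntegral_le_lintegral _ _)
    _ = ENNReal.ofReal ((2⁻¹ * r) ^ (-p)) * (ENNReal.ofReal (r ^ finrank ℝ E) *
          ∫⁻ z, ENNReal.ofReal ((1 + ‖z‖) ^ (-p)) ∂μ) := by
        rw [lintegral_const_mul' _ _ ENNReal.ofReal_ne_top,
          lintegral_comp_inv_smul_addHaar μ (g := fun z => ENNReal.ofReal ((1 + ‖z‖) ^ (-p)))
            (by fun_prop) hr]
    _ = _ := by
        rw [← mul_assoc, ← ENNReal.ofReal_mul (by positivity), Real.mul_rpow (by positivity) hr.le,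
          Real.inv_rpow zero_le_two, Real.rpow_neg zero_le_two, inv_inv, mul_assoc,
          ← Real.rpow_natCast r, ← Real.rpow_add hr, neg_add_eq_sub]

end PowerTail

lemma tendsto_ofReal_rpow_nhdsGT_zero {a : ℝ} (ha : 0 < a) :
    Tendsto (fun r : ℝ => ENNReal.ofReal (r ^ a)) (𝓝[>] 0) (𝓝 0) := by
  have := (ENNReal.continuous_ofReal.tendsto _).comp
    (Real.continuousAt_rpow_const 0 a (Or.inr ha.le)).tendsto
  simpa [Function.comp_def, Real.zero_rpow ha.ne'] using this.mono_left nhdsWithin_le_nhds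

lemma sInf_image_sphere_of_antitone_norm {E : Type*} [NormedAddCommGroup E] {K : E → ℝ}
    (hmono : ∀ x y : E, x ≠ 0 → y ≠ 0 → ‖x‖ ≤ ‖y‖ → K y ≤ K x) {y : E} (hy : y ≠ 0) :
    sInf (K '' {x | ‖x‖ = ‖y‖}) = K y := by
  suffices K '' {x | ‖x‖ = ‖y‖} = {K y} by rw [this, csInf_singleton]
  refine Set.eq_singleton_iff_unique_mem.mpr ⟨⟨y, rfl, rfl⟩, ?_⟩
  rintro _ ⟨x, hx : ‖x‖ = ‖y‖, rfl⟩
  have hx0 : x ≠ 0 := norm_ne_zero_iff.mp (hx ▸ norm_ne_zero_iff.mpr hy)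
  exact le_antisymm (hmono y x hy hx0 hx.ge) (hmono x y hx0 hy hx.le)

section Kernel

variable {N : ℕ} {K : EuclideanSpace ℝ (Fin N) → ℝ}

lemma kernelTail_ne_top (hint : kernelIntegrable N K) {ε : ℝ} (hε : 0 < ε) :
    kernelTail N K ε ≠ ⊤ := by
  set c : ℝ := min (ε ^ 2) 1
  have hc : 0 < c := lt_min (by positivity) one_pos
  have hpt : ∀ y ∈ {y : EuclideanSpace ℝ (Fin N) | ε ≤ ‖y‖}, ENNReal.ofReal (K y) ≤
      ENNReal.ofReal c⁻¹ * ENNReal.ofReal (min (‖y‖ ^ 2) 1 * K y) := by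
    intro y (hy : ε ≤ ‖y‖)
    rcases le_or_gt (K y) 0 with hK | hK
    · simp [ENNReal.ofReal_of_nonpos hK]
    have hcy : c ≤ min (‖y‖ ^ 2) 1 := min_le_min_right _ (pow_le_pow_left₀ hε.le hy 2)
    rw [← ENNReal.ofReal_mul (by positivity)]
    refine ENNReal.ofReal_le_ofReal ?_
    rw [le_inv_mul_iff₀ hc]
    exact mul_le_mul_of_nonneg_right hcy hK.le
  refine ne_top_of_le_ne_top (ENNReal.mul_ne_top (ENNReal.ofReal_ne_top (r := c⁻¹)) hint.ne) ?_
  calc kernelTail N K ε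
      ≤ ∫⁻ y, ENNReal.ofReal c⁻¹ * ENNReal.ofReal (min (‖y‖ ^ 2) 1 * K y) :=
        (setLIntegral_mono' (measurableSet_le measurable_const measurable_norm) hpt).trans
          (setLIntegral_le_lintegral _ _)
    _ = _ := lintegral_const_mul' _ _ ENNReal.ofReal_ne_top

lemma kernelTail_le_setLIntegral_inter_add (r ε : ℝ) :
    kernelTail N K r ≤
      (∫⁻ y in {y : EuclideanSpace ℝ (Fin N) | r ≤ ‖y‖} ∩ {y | ‖y‖ < ε}, ENNReal.ofReal (K y))
        + kernelTail N K ε := by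
  refine (lintegral_mono_set fun y (hy : r ≤ ‖y‖) => ?_).trans (lintegral_union_le _ _ _)
  by_cases h : ‖y‖ < ε
  · exact Or.inl ⟨hy, h⟩
  · exact Or.inr (not_lt.mp h)

lemma exists_kernelTail_le {s ε M : ℝ} (hs : 0 < s)
    (hK : ∀ y : EuclideanSpace ℝ (Fin N), 0 < ‖y‖ → ‖y‖ < ε → ‖y‖ ^ ((N : ℝ) + 2 * s) * K y ≤ M) :
    ∃ C : ℝ≥0∞, C ≠ ⊤ ∧ ∀ r, 0 < r →
      kernelTail N K r ≤ C * ENNReal.ofReal (r ^ (-(2 * s))) + kernelTail N K ε := by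
  set p : ℝ := N + 2 * s
  have hp : 0 < p := by positivity
  set J := ∫⁻ z : EuclideanSpace ℝ (Fin N), ENNReal.ofReal ((1 + ‖z‖) ^ (-p))
  have hJ : J ≠ ⊤ := (finite_integral_one_add_norm (by simp [p, hs])).ne
  refine ⟨ENNReal.ofReal M * ENNReal.ofReal (2 ^ p) * J, by finiteness, fun r hr => ?_⟩
  have hpt : ∀ y ∈ {y : EuclideanSpace ℝ (Fin N) | r ≤ ‖y‖} ∩ {y | ‖y‖ < ε},
      ENNReal.ofReal (K y) ≤ ENNReal.ofReal M * ENNReal.ofReal (‖y‖ ^ (-p)) := by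
    rintro y ⟨hry : r ≤ ‖y‖, hyε : ‖y‖ < ε⟩
    have hy : 0 < ‖y‖ := hr.trans_le hry
    rw [← ENNReal.ofReal_mul' (by positivity)]
    refine ENNReal.ofReal_le_ofReal ?_
    rw [Real.rpow_neg hy.le, ← div_eq_mul_inv, le_div_iff₀ (by positivity), mul_comm]
    exact hK y hy hyε
  have hnear : ∫⁻ y in {y : EuclideanSpace ℝ (Fin N) | r ≤ ‖y‖} ∩ {y | ‖y‖ < ε},
      ENNReal.ofReal (K y) ≤ ENNReal.ofReal M * (ENNReal.ofReal (2 ^ p * r ^ (-(2 * s))) * J) :=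
    calc _ ≤ ∫⁻ y in {y : EuclideanSpace ℝ (Fin N) | r ≤ ‖y‖} ∩ {y | ‖y‖ < ε},
            ENNReal.ofReal M * ENNReal.ofReal (‖y‖ ^ (-p)) :=
          setLIntegral_mono' ((measurableSet_le measurable_const measurable_norm).inter
            (measurableSet_lt measurable_norm measurable_const)) hpt
      _ ≤ ENNReal.ofReal M * ∫⁻ y in {y : EuclideanSpace ℝ (Fin N) | r ≤ ‖y‖},
            ENNReal.ofReal (‖y‖ ^ (-p)) := by
          rw [lintegral_const_mul' _ _ ENNReal.ofReal_ne_top]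
          gcongr
          exact inter_subset_left
      _ ≤ _ := by
          grw [setLIntegral_norm_rpow_neg_le _ hp hr, finrank_euclideanSpace_fin,
            show (N : ℝ) - p = -(2 * s) by ring]
  calc kernelTail N K r
      ≤ (∫⁻ y in {y : EuclideanSpace ℝ (Fin N) | r ≤ ‖y‖} ∩ {y | ‖y‖ < ε}, ENNReal.ofReal (K y))
          + kernelTail N K ε := kernelTail_le_setLIntegral_inter_add r ε
    _ ≤ _ := by
        gcongr
        refine hnear.trans_eq ?_
        rw [ENNReal.ofReal_mul (by positivity)]
        ring

lemma tendsto_rpow_mul_kernelTail_zero (hint : kernelIntegrable N K) {s s' ε M : ℝ}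
    (hs : 0 < s) (hss' : s < s') (hε : 0 < ε)
    (hK : ∀ y : EuclideanSpace ℝ (Fin N), 0 < ‖y‖ → ‖y‖ < ε → ‖y‖ ^ ((N : ℝ) + 2 * s) * K y ≤ M) :
    Tendsto (fun r : ℝ => ENNReal.ofReal (r ^ (2 * s')) * kernelTail N K r) (𝓝[>] 0) (𝓝 0) := by
  obtain ⟨C, hC, hbound⟩ := exists_kernelTail_le hs hK
  have hlim : Tendsto (fun r : ℝ => C * ENNReal.ofReal (r ^ (2 * s' - 2 * s))
      + ENNReal.ofReal (r ^ (2 * s')) * kernelTail N K ε) (𝓝[>] 0) (𝓝 0) := by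
    simpa using (ENNReal.Tendsto.const_mul (tendsto_ofReal_rpow_nhdsGT_zero (by linarith))
      (Or.inr hC)).add (ENNReal.Tendsto.mul_const (tendsto_ofReal_rpow_nhdsGT_zero (by linarith))
        (Or.inr (kernelTail_ne_top hint hε)))
  refine tendsto_of_tendsto_of_tendsto_of_le_of_le' tendsto_const_nhds hlim
    (Eventually.of_forall fun _ => zero_le) ?_
  filter_upwards [self_mem_nhdsWithin] with r (hr : 0 < r)
  calc ENNReal.ofReal (r ^ (2 * s')) * kernelTail N K r
      ≤ ENNReal.ofReal (r ^ (2 * s')) * (C * ENNReal.ofReal (r ^ (-(2 * s))) + kernelTail N K ε) := by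
        gcongr
        exact hbound r hr
    _ = _ := by
        rw [mul_add, mul_left_comm, ← ENNReal.ofReal_mul (by positivity), ← Real.rpow_add hr,
          ← sub_eq_add_neg]

lemma exists_lt_tendsto_of_lt_kernelS0 {s : ℝ} (hs : 0 ≤ s) (h : s < kernelS0 N K) :
    ∃ s' > s, Tendsto (fun r : ℝ => ENNReal.ofReal (r ^ (2 * s')) * kernelTail N K r)
      (𝓝[>] 0) (𝓝 ⊤) := by
  rw [kernelS0] at h
  obtain ⟨s', ⟨-, ht⟩, hss'⟩ := exists_lt_of_lt_csSup (Set.nonempty_iff_ne_empty.mpr fun hempty => by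
    rw [hempty, Real.sSup_empty] at h
    linarith) h
  exact ⟨s', hss', ht⟩

lemma exists_rpow_mul_gt_of_lt_kernelS0 (hint : kernelIntegrable N K) {s : ℝ} (hs : 0 < s)
    (hs0 : s < kernelS0 N K) {ε : ℝ} (hε : 0 < ε) (M : ℝ) :
    ∃ y : EuclideanSpace ℝ (Fin N), 0 < ‖y‖ ∧ ‖y‖ < ε ∧ M < ‖y‖ ^ ((N : ℝ) + 2 * s) * K y := by
  obtain ⟨s', hss', ht⟩ := exists_lt_tendsto_of_lt_kernelS0 hs.le hs0
  by_contra! hK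
  exact ENNReal.top_ne_zero
    (tendsto_nhds_unique ht (tendsto_rpow_mul_kernelTail_zero hint hs hss' hε hK))

end Kernel

theorem stmt5_general (N : ℕ) (K : EuclideanSpace ℝ (Fin N) → ℝ)
    (hint : kernelIntegrable N K)
    (hmono : ∀ x y : EuclideanSpace ℝ (Fin N), x ≠ 0 → y ≠ 0 → ‖x‖ ≤ ‖y‖ → K y ≤ K x) :
    ∀ s : ℝ, 0 < s → s < kernelS0 N K →
      ∃ r : ℕ → ℝ, (∀ n, 0 < r n) ∧ Tendsto r atTop (𝓝 0) ∧
        Tendsto (fun n =>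
          (r n) ^ ((N : ℝ) + 2 * s) *
            sInf (K '' {x : EuclideanSpace ℝ (Fin N) | ‖x‖ = r n})) atTop atTop := by
  intro s hs hss0
  choose y hy0 hyn hyK using fun n : ℕ =>
    exists_rpow_mul_gt_of_lt_kernelS0 hint hs hss0 (Nat.one_div_pos_of_nat (n := n)) (n : ℝ)
  refine ⟨fun n => ‖y n‖, hy0, squeeze_zero (fun n => (hy0 n).le) (fun n => (hyn n).le)
    tendsto_one_div_add_atTop_nhds_zero_nat, tendsto_atTop_mono (fun n => ?_)
    tendsto_natCast_atTop_atTop⟩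
  rw [sInf_image_sphere_of_antitone_norm hmono (norm_pos_iff.mp (hy0 n))]
  exact (hyK n).le

theorem stmt5 (N : ℕ) (hN : 1 ≤ N) (K : EuclideanSpace ℝ (Fin N) → ℝ)
    (hmeas : Measurable K)
    (hpos : ∀ x : EuclideanSpace ℝ (Fin N), x ≠ 0 → 0 < K x)
    (hint : kernelIntegrable N K)
    (hmono : ∀ x y : EuclideanSpace ℝ (Fin N), x ≠ 0 → y ≠ 0 → ‖x‖ ≤ ‖y‖ → K y ≤ K x)
    (hs0 : 0 < kernelS0 N K) :
    ∀ s : ℝ, 0 < s → s < kernelS0 N K →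
      ∃ r : ℕ → ℝ, (∀ n, 0 < r n) ∧ Tendsto r atTop (𝓝 0) ∧
        Tendsto (fun n =>
          (r n) ^ ((N : ℝ) + 2 * s) *
            sInf (K '' {x : EuclideanSpace ℝ (Fin N) | ‖x‖ = r n})) atTop atTop :=
  stmt5_general N K hint hmono
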